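/- arXiv:2510.14131 — 4 statements merged into one kernel-verified Lean document; each statement's English description precedes it below -/
import Mathlib

section
/- Let G be a group acting on a type α and let f : α → ℝ be invariant under the action, i.e., f (g • x) = f x for every g ∈ G and x ∈ α. Let S be a nonempty finite set of elements of α and let S' ⊆ S be a subset such that for every x ∈ S there exists g ∈ G with g • x ∈ S'. Then S' is nonempty and the minimum of f over S' equals the minimum of f over S. -/
/-- Abstract core of Proposition 1: restricting a symmetric minimization problem to a
subset of the feasible set containing a representative of each symmetry orbit does not
change the optimal value. -/
theorem symmetry_breaking_preserves_min
    {G α : Type*} [Group G] [MulAction G α]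
    (f : α → ℝ) (hf : ∀ (g : G) (x : α), f (g • x) = f x)
    (S S' : Finset α) (hS : S.Nonempty) (hsub : S' ⊆ S)
    (hrep : ∀ x ∈ S, ∃ g : G, g • x ∈ S') :
    ∃ hS' : S'.Nonempty, S'.inf' hS' f = S.inf' hS f := by
  obtain ⟨x0, hx0⟩ := hS
  obtain ⟨g0, hg0⟩ := hrep x0 hx0
  have hS' : S'.Nonempty := ⟨g0 • x0, hg0⟩
  refine ⟨hS', le_antisymm ?_ ?_⟩
  · apply Finset.le_inf'
    intro b hb
    obtain ⟨g, hg⟩ := hrep b hb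
    calc S'.inf' hS' f ≤ f (g • b) := Finset.inf'_le f hg
      _ = f b := hf g b
  · apply Finset.le_inf'
    intro b hb
    exact Finset.inf'_le f (hsub hb)
end

section
/- Let α be a metric space, let s be a nonempty finite set of points of α, and let v₀ ∈ s. For every nonempty list w of points of α with first element v₀ and whose set of elements equals s (a closed walk from v₀ visiting exactly the points of s, possibly with repetitions), there exists a list w' with no duplicate elements, with first element v₀, whose set of elements equals s, and whose cyclic tour length is at most the cyclic tour length of w. -/
/-- The cyclic tour length of a list `l = [x₀, …, x_{k-1}]` in a metric space:
`Σ_{i=0}^{k-2} dist (x i) (x (i+1)) + dist (x (k-1)) x₀` (and `0` for empty or singleton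
lists, since then the only pair is `(x₀, x₀)` or there is none). -/
noncomputable def cyclicTourLength {α : Type*} [MetricSpace α] (l : List α) : ℝ :=
  ((l.zip (l.rotate 1)).map fun p => dist p.1 p.2).sum

noncomputable def pathLen {α : Type*} [MetricSpace α] : List α → ℝ
  | [] => 0
  | [_] => 0
  | x :: y :: t => dist x y + pathLen (y :: t)

lemma zip_extend {α : Type*} : ∀ (l₁ l₂ l₃ : List α), l₂.length ≤ l₁.length →
    (l₁ ++ l₃).zip l₂ = l₁.zip l₂ := by
  intro l₁
  induction l₁ with
  | nil => intro l₂ l₃ h; simp at h; simp [h]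
  | cons x t ih =>
    intro l₂ l₃ h
    cases l₂ with
    | nil => simp
    | cons y u => simp at h ⊢; exact ih u l₃ h

lemma ctl_eq_pathLen {α : Type*} [MetricSpace α] (a : α) (l : List α) :
    cyclicTourLength (a :: l) = pathLen ((a :: l) ++ [a]) := by
  have hz : ((a :: l) ++ [a]).zip (l ++ [a]) = (a :: l).zip (l ++ [a]) := by
    apply zip_extend; simp
  have key : ∀ m : List α, pathLen m = ((m.zip m.tail).map fun p => dist p.1 p.2).sum := by
    intro m
    induction m with
    | nil => simp [pathLen]
    | cons x t ih =>
      cases t with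
      | nil => simp [pathLen]
      | cons y u => simp [pathLen, ih]
  rw [key]
  have : ((a :: l) ++ [a]).tail = l ++ [a] := by simp
  rw [this, hz]
  simp [cyclicTourLength, List.rotate_cons_succ]

lemma pathLen_drop {α : Type*} [MetricSpace α] :
    ∀ (xs : List α) (a : α) (ys : List α), pathLen (xs ++ ys) ≤ pathLen (xs ++ a :: ys) := by
  intro xs
  induction xs with
  | nil =>
    intro a ys
    cases ys with
    | nil => simp [pathLen]
    | cons y t =>
      simp only [List.nil_append, pathLen]
      nlinarith [dist_nonneg (x := a) (y := y)]
  | cons x t ih =>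
    intro a ys
    cases t with
    | nil =>
      cases ys with
      | nil => simp [pathLen]
      | cons y u =>
        simp only [List.cons_append, List.nil_append, pathLen]
        nlinarith [dist_triangle x a y]
    | cons x' t' =>
      have := ih a ys
      simp only [List.cons_append, List.append_eq, pathLen] at *
      linarith

lemma not_nodup_split {α : Type*} : ∀ (l : List α), ¬ l.Nodup →
    ∃ l₁ a l₂, l = l₁ ++ a :: l₂ ∧ a ∈ l₁ := by
  intro l
  induction l with
  | nil => intro h; simp at h
  | cons x t ih =>
    intro h
    by_cases hx : x ∈ t
    · obtain ⟨t₁, t₂, rfl⟩ := List.append_of_mem hx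
      exact ⟨x :: t₁, x, t₂, by simp, by simp⟩
    · have ht : ¬ t.Nodup := by
        intro hn; exact h (List.nodup_cons.mpr ⟨hx, hn⟩)
      obtain ⟨l₁, a, l₂, rfl, ha⟩ := ih ht
      exact ⟨x :: l₁, a, l₂, by simp, by simp [ha]⟩

lemma shortcut {α : Type*} [MetricSpace α] [DecidableEq α] :
    ∀ (n : ℕ) (w : List α), w.length ≤ n → w ≠ [] →
    ∃ w' : List α, w'.Nodup ∧ w'.head? = w.head? ∧ w'.toFinset = w.toFinset ∧
      cyclicTourLength w' ≤ cyclicTourLength w := by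
  intro n
  induction n with
  | zero => intro w hlen hne; cases w <;> simp_all
  | succ n ih =>
    intro w hlen hne
    by_cases hnd : w.Nodup
    · exact ⟨w, hnd, rfl, rfl, le_refl _⟩
    · obtain ⟨l₁, a, l₂, rfl, ha⟩ := not_nodup_split w hnd
      obtain ⟨h, t, rfl⟩ : ∃ h t, l₁ = h :: t := by
        cases l₁ with
        | nil => simp at ha
        | cons h t => exact ⟨h, t, rfl⟩
      set w' : List α := (h :: t) ++ l₂ with hw'
      have hne' : w' ≠ [] := by simp [hw']
      have hlen' : w'.length ≤ n := by
        simp [hw'] at hlen ⊢; omega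
      have hctl : cyclicTourLength w' ≤ cyclicTourLength ((h :: t) ++ a :: l₂) := by
        have e1 : cyclicTourLength ((h :: t) ++ a :: l₂)
            = pathLen ((h :: t) ++ a :: (l₂ ++ [h])) := by
          rw [show (h :: t) ++ a :: l₂ = h :: (t ++ a :: l₂) by simp,
            ctl_eq_pathLen]
          simp
        have e2 : cyclicTourLength w' = pathLen ((h :: t) ++ (l₂ ++ [h])) := by
          rw [show w' = h :: (t ++ l₂) by simp [hw'], ctl_eq_pathLen]
          simp
        rw [e1, e2]
        exact pathLen_drop (h :: t) a (l₂ ++ [h])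
      have hset' : w'.toFinset = ((h :: t) ++ a :: l₂).toFinset := by
        have haf : a = h ∨ a ∈ t.toFinset := by
          have := List.mem_toFinset.mpr ha
          simpa using this
        simp only [hw', List.toFinset_append, List.toFinset_cons]
        ext x
        simp only [Finset.mem_union, Finset.mem_insert]
        constructor
        · tauto
        · rintro (hx | rfl | hx)
          · tauto
          · cases haf with
            | inl hh => left; left; exact hh
            | inr hh => left; right; exact hh
          · tauto
      obtain ⟨w'', h1, h2, h3, h4⟩ := ih w' hlen' hne'
      exact ⟨w'', h1, by simpa [hw'] using h2, h3.trans hset', h4.trans hctl⟩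

/-- Shortcutting: any closed walk from `v₀` visiting exactly the points of `s`
(repetitions allowed) can be replaced by a duplicate-free tour from `v₀` through
exactly the points of `s` of no greater cyclic tour length. -/
theorem exists_nodup_tour_of_walk
    {α : Type*} [MetricSpace α] [DecidableEq α]
    (s : Finset α) (hs : s.Nonempty) (v₀ : α) (hv₀ : v₀ ∈ s)
    (w : List α) (hw : w ≠ []) (hhead : w.head? = some v₀) (hset : w.toFinset = s) :
    ∃ w' : List α, w'.Nodup ∧ w'.head? = some v₀ ∧ w'.toFinset = s ∧
      cyclicTourLength w' ≤ cyclicTourLength w := by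
  obtain ⟨w', h1, h2, h3, h4⟩ := shortcut w.length w le_rfl hw
  exact ⟨w', h1, h2.trans hhead, h3.trans hset, h4⟩
end

section
/- Let α be a metric space, let s be a nonempty finite set of points of α, and let v₀ ∈ s. The infimum of the cyclic tour length over all nonempty lists w with first element v₀ whose set of elements equals s (closed walks from v₀ through exactly the points of s, repetitions allowed) equals the minimum of the cyclic tour length over all duplicate-free such lists (Hamiltonian tours of s starting at v₀); moreover this common value is attained by a duplicate-free list. -/
section aux
variable {α : Type*} [MetricSpace α]

noncomputable def pathLength : List α → ℝ
  | [] => 0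
  | [_] => 0
  | a :: b :: t => dist a b + pathLength (b :: t)

lemma zip_tail_eq_path (z : α) : ∀ (l : List α),
    ((l.zip (l.tail ++ [z])).map fun p => dist p.1 p.2).sum = pathLength (l ++ [z])
  | [] => by simp [pathLength]
  | [a] => by simp [pathLength]
  | a :: b :: t => by
      have ih := zip_tail_eq_path z (b :: t)
      simp only [List.tail_cons, List.cons_append, List.zip_cons_cons, List.map_cons,
        List.sum_cons, pathLength] at *
      rw [ih]

lemma cyclic_eq_path (a : α) (t : List α) :
    cyclicTourLength (a :: t) = pathLength ((a :: t) ++ [a]) := by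
  rw [cyclicTourLength, List.rotate_cons_succ, List.rotate_zero]
  exact zip_tail_eq_path a (a :: t)

lemma pathLength_removal (x : α) : ∀ (u v : List α), u ≠ [] → v ≠ [] →
    pathLength (u ++ v) ≤ pathLength (u ++ x :: v)
  | [], _, h, _ => absurd rfl h
  | [a], v, _, hv => by
      match v, hv with
      | b :: v', _ =>
        show pathLength (a :: b :: v') ≤ pathLength (a :: x :: b :: v')
        simp only [pathLength]
        have := dist_triangle a x b
        linarith
  | a :: c :: u'', v, _, hv => by
      have ih := pathLength_removal x (c :: u'') v (by simp) hv
      show pathLength (a :: c :: (u'' ++ v)) ≤ pathLength (a :: c :: (u'' ++ x :: v))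
      simp only [pathLength]
      have h2 : pathLength (c :: (u'' ++ v)) ≤ pathLength (c :: (u'' ++ x :: v)) := ih
      linarith

lemma sublist_pair {x : α} : ∀ {w : List α}, List.Sublist [x, x] w →
    ∃ u v, w = u ++ x :: v ∧ x ∈ u
  | a :: t, h => by
      cases h with
      | cons _ h' =>
          obtain ⟨u, v, rfl, hx⟩ := sublist_pair h'
          exact ⟨a :: u, v, rfl, List.mem_cons_of_mem _ hx⟩
      | cons_cons _ h' =>
          have hx : x ∈ t := h'.subset (by simp)
          obtain ⟨u, v, rfl⟩ := List.append_of_mem hx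
          exact ⟨x :: u, v, rfl, List.mem_cons_self⟩

variable [DecidableEq α]

lemma exists_nodup_le_aux : ∀ (n : ℕ) (w : List α), w.length ≤ n → w ≠ [] →
    ∃ w', w'.Nodup ∧ w'.head? = w.head? ∧ w'.toFinset = w.toFinset ∧
      cyclicTourLength w' ≤ cyclicTourLength w := by
  intro n
  induction n with
  | zero => intro w hl hw; simp [List.length_eq_zero_iff] at hl; exact absurd hl hw
  | succ n ih =>
    intro w hl hw
    by_cases hnd : w.Nodup
    · exact ⟨w, hnd, rfl, rfl, le_refl _⟩
    · obtain ⟨x, hdup⟩ := List.exists_duplicate_iff_not_nodup.2 hnd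
      have hsub : List.Sublist [x, x] w := List.duplicate_iff_sublist.1 hdup
      obtain ⟨u, v, rfl, hxu⟩ := sublist_pair hsub
      have hu : u ≠ [] := by rintro rfl; simp at hxu
      obtain ⟨a, u₀, rfl⟩ := List.exists_cons_of_ne_nil hu
      have hle : cyclicTourLength (a :: u₀ ++ v) ≤ cyclicTourLength (a :: u₀ ++ x :: v) := by
        rw [show a :: u₀ ++ v = a :: (u₀ ++ v) from rfl,
            show a :: u₀ ++ x :: v = a :: (u₀ ++ x :: v) from rfl,
            cyclic_eq_path, cyclic_eq_path]
        have := pathLength_removal x (a :: u₀) (v ++ [a]) (by simp) (by simp)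
        simpa using this
      have hlen : (a :: u₀ ++ v).length ≤ n := by
        have := hl
        simp only [List.length_append, List.length_cons] at this ⊢
        omega
      obtain ⟨w', h1, h2, h3, h4⟩ := ih (a :: u₀ ++ v) hlen (by simp)
      refine ⟨w', h1, ?_, ?_, h4.trans hle⟩
      · rw [h2]; rfl
      · rw [h3]
        ext y
        simp only [List.toFinset_append, Finset.mem_union, List.mem_toFinset, List.mem_cons]
        constructor
        · rintro (h | h); exacts [Or.inl h, Or.inr (Or.inr h)]
        · rintro (h | rfl | h)
          exacts [Or.inl h, Or.inl (by simpa using hxu), Or.inr h]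

lemma exists_nodup_le (w : List α) (hw : w ≠ []) :
    ∃ w', w'.Nodup ∧ w'.head? = w.head? ∧ w'.toFinset = w.toFinset ∧
      cyclicTourLength w' ≤ cyclicTourLength w :=
  exists_nodup_le_aux w.length w le_rfl hw

end aux

/-- The infimum of the cyclic tour length over all closed walks from `v₀` through exactly
the points of `s` (repetitions allowed) is attained by a duplicate-free such list
(a Hamiltonian tour of `s` starting at `v₀`), and hence equals the minimum of the cyclic
tour length over all duplicate-free such lists. -/
theorem inf_walk_eq_min_nodup_tour
    {α : Type*} [MetricSpace α] [DecidableEq α]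
    (s : Finset α) (hs : s.Nonempty) (v₀ : α) (hv₀ : v₀ ∈ s) :
    ∃ w' : List α, w'.Nodup ∧ w'.head? = some v₀ ∧ w'.toFinset = s ∧
      IsLeast {c : ℝ | ∃ w : List α, w.head? = some v₀ ∧ w.toFinset = s ∧
        c = cyclicTourLength w} (cyclicTourLength w') ∧
      IsLeast {c : ℝ | ∃ w : List α, w.Nodup ∧ w.head? = some v₀ ∧ w.toFinset = s ∧
        c = cyclicTourLength w} (cyclicTourLength w') := by

  classical
  set A : Set (List α) := {l | l.Nodup ∧ l.head? = some v₀ ∧ l.toFinset = s} with hA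
  have hfin : A.Finite := by
    apply Set.Finite.subset (List.finite_toSet s.toList.permutations)
    rintro l ⟨h1, _, h3⟩
    simp only [Set.mem_setOf_eq, List.mem_permutations]
    exact List.perm_of_nodup_nodup_toFinset_eq h1 s.nodup_toList
      (by rw [h3, Finset.toList_toFinset])
  have hne : A.Nonempty := by
    refine ⟨v₀ :: (s.erase v₀).toList, ⟨?_, rfl, ?_⟩⟩
    · refine List.nodup_cons.2 ⟨?_, Finset.nodup_toList _⟩
      simp [Finset.mem_toList]
    · ext y
      simp only [List.toFinset_cons, List.mem_toFinset, Finset.mem_insert,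
        Finset.mem_toList, Finset.mem_erase, List.toFinset_coe]
      constructor
      · rintro (rfl | ⟨_, h⟩); exacts [hv₀, h]
      · intro hy
        by_cases h : y = v₀
        · exact Or.inl h
        · exact Or.inr ⟨h, hy⟩
  obtain ⟨w', hw'A, hmin⟩ := Set.exists_min_image A cyclicTourLength hfin hne
  obtain ⟨hnd, hhd, htf⟩ := hw'A
  have hlb : ∀ w : List α, w.head? = some v₀ → w.toFinset = s →
      cyclicTourLength w' ≤ cyclicTourLength w := by
    intro w h1 h2
    have hwne : w ≠ [] := by rintro rfl; simp at h1
    obtain ⟨w'', n1, n2, n3, n4⟩ := exists_nodup_le w hwne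
    have : w'' ∈ A := ⟨n1, n2.trans h1, n3.trans h2⟩
    exact (hmin w'' this).trans n4
  refine ⟨w', hnd, hhd, htf, ⟨⟨w', hhd, htf, rfl⟩, ?_⟩, ⟨⟨w', hnd, hhd, htf, rfl⟩, ?_⟩⟩
  · rintro c ⟨w, h1, h2, rfl⟩
    exact hlb w h1 h2
  · rintro c ⟨w, _, h1, h2, rfl⟩
    exact hlb w h1 h2
end

section
/- Fix a type V of nodes, a start node l₀ ∈ V, a start time t₀ ∈ ℕ, a deadline t' ∈ ℕ, battery bounds C_max, C_min ∈ ℝ, arc reduced-cost increments rc : V → V → ℝ, arc energy consumptions R : V → V → ℝ, arc durations τ : V → V → ℕ, and nodal discharges g : V → ℝ. For a partial route, i.e., a nonempty list P = [l₀, v₁, …, v_m] starting at l₀, define cost(P) = Σ_{j=0}^{m−1} rc(v_j, v_{j+1}) (with v₀ = l₀), time(P) = t₀ + Σ_{j=0}^{m−1} τ(v_j, v_{j+1}), and soc(P) = C_max − Σ_{j=0}^{m−1} R(v_j, v_{j+1}) − Σ_{j=1}^{m} g(v_j); call P feasible if time(P) ≤ t' and soc(Q) ≥ C_min for every nonempty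 prefix Q of P. Suppose P and P' are feasible partial routes starting at l₀ with the same last node, such that cost(P') < cost(P), soc(P') ≥ soc(P), and time(P') < time(P). Then for every list Q of nodes such that the concatenation P ++ Q is feasible, the concatenation P' ++ Q is also feasible and cost(P' ++ Q) < cost(P ++ Q). -/
/-- Reduced cost of a partial route `P = [v₀, v₁, …, v_m]`:
`Σ_{j=0}^{m-1} rc (v j) (v (j+1))`. -/
noncomputable def routeCost {V : Type*} (rc : V → V → ℝ) (P : List V) : ℝ :=
  ((P.zip P.tail).map fun p => rc p.1 p.2).sum

/-- Arrival time of a partial route `P = [v₀, v₁, …, v_m]` starting at time `t₀`: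
`t₀ + Σ_{j=0}^{m-1} τ (v j) (v (j+1))`. -/
def routeTime {V : Type*} (τ : V → V → ℕ) (t₀ : ℕ) (P : List V) : ℕ :=
  t₀ + ((P.zip P.tail).map fun p => τ p.1 p.2).sum

/-- State of charge after a partial route `P = [v₀, v₁, …, v_m]`:
`Cmax − Σ_{j=0}^{m-1} R (v j) (v (j+1)) − Σ_{j=1}^{m} g (v j)`. -/
noncomputable def routeSoc {V : Type*} (R : V → V → ℝ) (g : V → ℝ) (Cmax : ℝ)
    (P : List V) : ℝ :=
  Cmax - ((P.zip P.tail).map fun p => R p.1 p.2).sum - (P.tail.map g).sum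

/-- A partial route is feasible if its arrival time is at most the deadline `t'` and the
state of charge of every nonempty prefix is at least `Cmin`. -/
def routeFeasible {V : Type*} (R : V → V → ℝ) (τ : V → V → ℕ) (g : V → ℝ)
    (Cmax Cmin : ℝ) (t₀ t' : ℕ) (P : List V) : Prop :=
  routeTime τ t₀ P ≤ t' ∧
  ∀ Q : List V, Q ≠ [] → Q <+: P → Cmin ≤ routeSoc R g Cmax Q

private lemma pairs_append {V : Type*} :
    ∀ {P : List V} (Q : List V) {l : V}, P.getLast? = some l →
      (P ++ Q).zip (P ++ Q).tail = P.zip P.tail ++ (l :: Q).zip Q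
  | [], _, _, h => by simp at h
  | [a], Q, l, h => by
    simp only [List.getLast?_singleton, Option.some.injEq] at h
    subst h
    simp
  | a :: b :: P, Q, l, h => by
    rw [List.getLast?_cons_cons] at h
    have ih := pairs_append (P := b :: P) Q h
    simp only [List.cons_append, List.tail_cons] at *
    rw [List.zip_cons_cons, List.zip_cons_cons, ih]
    rfl

private lemma routeCost_append {V : Type*} (rc : V → V → ℝ) {P : List V} (Q : List V)
    {l : V} (h : P.getLast? = some l) :
    routeCost rc (P ++ Q) = routeCost rc P + routeCost rc (l :: Q) := by
  unfold routeCost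
  rw [pairs_append Q h, List.map_append, List.sum_append, List.tail_cons]

private lemma routeTime_append {V : Type*} (τ : V → V → ℕ) (t₀ : ℕ) {P : List V}
    (Q : List V) {l : V} (h : P.getLast? = some l) :
    routeTime τ t₀ (P ++ Q) =
      routeTime τ t₀ P + (((l :: Q).zip Q).map fun p => τ p.1 p.2).sum := by
  unfold routeTime
  rw [pairs_append Q h, List.map_append, List.sum_append]
  omega

private lemma routeSoc_append {V : Type*} (R : V → V → ℝ) (g : V → ℝ) (Cmax : ℝ)
    {P : List V} (Q : List V) {l : V} (h : P.getLast? = some l) :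
    routeSoc R g Cmax (P ++ Q) =
      routeSoc R g Cmax P - (((l :: Q).zip Q).map fun p => R p.1 p.2).sum
        - (Q.map g).sum := by
  have hne : P ≠ [] := by rintro rfl; simp at h
  unfold routeSoc
  rw [pairs_append Q h, List.tail_append_of_ne_nil hne, List.map_append, List.sum_append,
    List.map_append, List.sum_append]
  ring

/-- Dominance rule (i) of Proposition 3: if two feasible partial routes start at `l₀` and
end at the same node, and one has strictly smaller reduced cost, at least as large state
of charge, and strictly earlier arrival time, then every feasible extension of the
dominated route yields a feasible extension of the dominating route with strictly smaller
reduced cost. -/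
theorem dominance_rule_one
    {V : Type*} (l₀ : V) (t₀ t' : ℕ) (Cmax Cmin : ℝ)
    (rc R : V → V → ℝ) (τ : V → V → ℕ) (g : V → ℝ)
    (P P' : List V)
    (hPhead : P.head? = some l₀) (hP'head : P'.head? = some l₀)
    (hlast : P.getLast? = P'.getLast?)
    (hPfeas : routeFeasible R τ g Cmax Cmin t₀ t' P)
    (hP'feas : routeFeasible R τ g Cmax Cmin t₀ t' P')
    (hcost : routeCost rc P' < routeCost rc P)
    (hsoc : routeSoc R g Cmax P ≤ routeSoc R g Cmax P')
    (htime : routeTime τ t₀ P' < routeTime τ t₀ P) :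
    ∀ Q : List V, routeFeasible R τ g Cmax Cmin t₀ t' (P ++ Q) →
      routeFeasible R τ g Cmax Cmin t₀ t' (P' ++ Q) ∧
      routeCost rc (P' ++ Q) < routeCost rc (P ++ Q) := by
  intro Q hPQ
  have hPne : P ≠ [] := by rintro rfl; simp at hPhead
  have hP'ne : P' ≠ [] := by rintro rfl; simp at hP'head
  have hl : P.getLast? = some (P.getLast hPne) := List.getLast?_eq_getLast hPne
  set l := P.getLast hPne with hldef
  have hl' : P'.getLast? = some l := hlast ▸ hl
  obtain ⟨hPQt, hPQsoc⟩ := hPQ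
  refine ⟨⟨?_, ?_⟩, ?_⟩
  · rw [routeTime_append τ t₀ Q hl'] at *
    rw [routeTime_append τ t₀ Q hl] at hPQt
    omega
  · intro Q' hne hpre
    obtain ⟨t, ht⟩ := hpre
    rcases List.append_eq_append_iff.mp ht with ⟨a', ha1, _⟩ | ⟨c', hc1, hc2⟩
    · exact hP'feas.2 Q' hne ⟨a', ha1.symm⟩
    · subst hc1
      have hsoc1 : Cmin ≤ routeSoc R g Cmax (P ++ c') := by
        refine hPQsoc (P ++ c') (by simp [hPne]) ⟨t, by rw [hc2]; simp⟩
      rw [routeSoc_append R g Cmax c' hl] at hsoc1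
      rw [routeSoc_append R g Cmax c' hl']
      linarith
  · rw [routeCost_append rc Q hl, routeCost_append rc Q hl']
    linarith
end
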